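/- arXiv:1104.5332 — 4 statements merged into one kernel-verified Lean document; each statement's English description precedes it below -/
import Mathlib

section
/- Assume R̃ = 0 on U. If X and Y are smooth ∇̃-parallel vector fields on U, then for every x ∈ U and all indices i,j one has ∇̃_j [X,Y]^i (x) = ∑_{a,b} R̂^i_{ab,j}(x) X^a(x) Y^b(x), where ∇̃_j is applied to the vector field [X,Y]. In particular, if in addition R̂ = 0 on U, then the Lie bracket of any two ∇̃-parallel vector fields is again ∇̃-parallel. -/
/-- Partial derivative ∂_j f at x. -/
noncomputable def pd {n : ℕ} (f : (Fin n → ℝ) → ℝ) (j : Fin n) (x : Fin n → ℝ) : ℝ :=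
  fderiv ℝ f x (Pi.single j 1)

/-- The curvature `R̃^i_{rj,k}`. -/
noncomputable def Rtil {n : ℕ} (Γ : Fin n → Fin n → Fin n → (Fin n → ℝ) → ℝ)
    (i r j k : Fin n) (x : Fin n → ℝ) : ℝ :=
  pd (Γ i j k) r x - pd (Γ i r k) j x
    + ∑ a, (Γ a r k x * Γ i j a x - Γ a j k x * Γ i r a x)

/-- The curvature `R̂^i_{rj,k}`. -/
noncomputable def Rhat {n : ℕ} (Γ : Fin n → Fin n → Fin n → (Fin n → ℝ) → ℝ)
    (i r j k : Fin n) (x : Fin n → ℝ) : ℝ :=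
  pd (Γ i k j) r x - pd (Γ i k r) j x
    + ∑ a, (Γ a k r x * Γ i a j x - Γ a k j x * Γ i a r x)

/-- The Lie bracket `[X,Y]^i = ∑_a (X^a ∂_a Y^i − Y^a ∂_a X^i)`. -/
noncomputable def bracket {n : ℕ} (X Y : (Fin n → ℝ) → Fin n → ℝ)
    (x : Fin n → ℝ) (i : Fin n) : ℝ :=
  ∑ a, (X x a * pd (fun y => Y y i) a x - Y x a * pd (fun y => X y i) a x)

section helpers

variable {n : ℕ}

lemma pd_congr_nhds {f g : (Fin n → ℝ) → ℝ} {x : Fin n → ℝ}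
    (h : f =ᶠ[nhds x] g) (j : Fin n) : pd f j x = pd g j x := by
  unfold pd; rw [h.fderiv_eq]

lemma pd_sum {ι : Type*} (s : Finset ι) (f : ι → (Fin n → ℝ) → ℝ)
    (j : Fin n) (x : Fin n → ℝ) (hf : ∀ i ∈ s, DifferentiableAt ℝ (f i) x) :
    pd (fun y => ∑ i ∈ s, f i y) j x = ∑ i ∈ s, pd (f i) j x := by
  unfold pd; rw [fderiv_fun_sum hf]; simp

lemma pd_mul {f g : (Fin n → ℝ) → ℝ} {x : Fin n → ℝ}
    (hf : DifferentiableAt ℝ f x) (hg : DifferentiableAt ℝ g x) (j : Fin n) :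
    pd (fun y => f y * g y) j x = pd f j x * g x + f x * pd g j x := by
  unfold pd; rw [fderiv_fun_mul hf hg]; simp; ring

lemma pd_sub {f g : (Fin n → ℝ) → ℝ} {x : Fin n → ℝ}
    (hf : DifferentiableAt ℝ f x) (hg : DifferentiableAt ℝ g x) (j : Fin n) :
    pd (fun y => f y - g y) j x = pd f j x - pd g j x := by
  unfold pd; rw [fderiv_fun_sub hf hg]; simp

lemma congr3 (f g : Fin n → Fin n → Fin n → ℝ) (h : ∀ a b c, f a b c = g a b c) :
    (∑ a, ∑ b, ∑ c, f a b c) = ∑ a, ∑ b, ∑ c, g a b c := by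
  refine Finset.sum_congr rfl fun a _ => Finset.sum_congr rfl fun b _ =>
    Finset.sum_congr rfl fun c _ => h a b c

lemma s12 (f : Fin n → Fin n → Fin n → ℝ) :
    (∑ a, ∑ b, ∑ c, f a b c) = ∑ a, ∑ b, ∑ c, f b a c := Finset.sum_comm

lemma s23 (f : Fin n → Fin n → Fin n → ℝ) :
    (∑ a, ∑ b, ∑ c, f a b c) = ∑ a, ∑ b, ∑ c, f a c b :=
  Finset.sum_congr rfl fun a _ => Finset.sum_comm

lemma rot3 (f : Fin n → Fin n → Fin n → ℝ) :
    (∑ a, ∑ b, ∑ c, f a b c) = ∑ a, ∑ b, ∑ c, f c a b :=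
  (s12 f).trans (s23 fun a b c => f b a c)

lemma s13 (f : Fin n → Fin n → Fin n → ℝ) :
    (∑ a, ∑ b, ∑ c, f a b c) = ∑ a, ∑ b, ∑ c, f c b a :=
  (rot3 f).trans (s12 fun a b c => f c a b)

lemma key_alg (i j : Fin n) (G : Fin n → Fin n → Fin n → ℝ)
    (D : Fin n → Fin n → ℝ) (X Y : Fin n → ℝ) :
    (∑ a, ((∑ c, G a j c * X c) * (∑ b, G i a b * Y b)
      + X a * (∑ b, ((D a b + ∑ c, (G c a b * G i j c - G c j b * G i a c)) * Y b
          + G i a b * (∑ c, G b j c * Y c)))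
      - ((∑ c, G a j c * Y c) * (∑ b, G i a b * X b)
      + Y a * (∑ b, ((D a b + ∑ c, (G c a b * G i j c - G c j b * G i a c)) * X b
          + G i a b * (∑ c, G b j c * X c))))))
    - ∑ c, G i j c * (∑ a, (X a * (∑ b, G c a b * Y b) - Y a * (∑ b, G c a b * X b)))
    = ∑ a, ∑ b, ((D a b - D b a + ∑ c, (G c j a * G i c b - G c j b * G i c a)) * X a * Y b) := by
  have h1 : (∑ a, ∑ b, ∑ c, G a j c * X c * (G i a b * Y b))
      = ∑ a, ∑ b, ∑ c, G c j a * G i c b * X a * Y b :=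
    (s13 _).trans (congr3 _ _ fun a b c => by ring)
  have h2 : (∑ a, ∑ b, X a * (D a b * Y b)) = ∑ a, ∑ b, D a b * X a * Y b :=
    Finset.sum_congr rfl fun a _ => Finset.sum_congr rfl fun b _ => by ring
  have h3 : (∑ a, ∑ b, ∑ c, X a * (G c a b * G i j c * Y b))
      = ∑ a, ∑ b, ∑ c, G i j a * (X b * (G a b c * Y c)) :=
    ((rot3 _).trans (congr3 _ _ fun a b c => by ring)).symm
  have h45 : (∑ a, ∑ b, ∑ c, X a * (G c j b * G i a c * Y b))
      = ∑ a, ∑ b, ∑ c, X a * (G i a b * (G b j c * Y c)) :=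
    ((s23 _).trans (congr3 _ _ fun a b c => by ring)).symm
  have h6 : (∑ a, ∑ b, ∑ c, G a j c * Y c * (G i a b * X b))
      = ∑ a, ∑ b, ∑ c, G c j b * G i c a * X a * Y b :=
    (rot3 _).trans (congr3 _ _ fun a b c => by ring)
  have h7 : (∑ a, ∑ b, Y a * (D a b * X b)) = ∑ a, ∑ b, D b a * X a * Y b :=
    (Finset.sum_comm).trans (Finset.sum_congr rfl fun a _ =>
      Finset.sum_congr rfl fun b _ => by ring)
  have h8 : (∑ a, ∑ b, ∑ c, Y a * (G c a b * G i j c * X b))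
      = ∑ a, ∑ b, ∑ c, G i j a * (Y b * (G a b c * X c)) :=
    ((rot3 _).trans (congr3 _ _ fun a b c => by ring)).symm
  have h9 : (∑ a, ∑ b, ∑ c, Y a * (G c j b * G i a c * X b))
      = ∑ a, ∑ b, ∑ c, Y a * (G i a b * (G b j c * X c)) :=
    ((s23 _).trans (congr3 _ _ fun a b c => by ring)).symm
  simp only [Finset.mul_sum, Finset.sum_mul, mul_add, add_mul, mul_sub, sub_mul,
    Finset.sum_add_distrib, Finset.sum_sub_distrib]
  linear_combination h1 + h2 + h3 - h45 - h6 - h7 - h8 + h9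

end helpers

/-- Assume R̃ = 0 on U. If X and Y are smooth ∇̃-parallel vector fields on U, then
`∇̃_j [X,Y]^i (x) = ∑_{a,b} R̂^i_{ab,j}(x) X^a(x) Y^b(x)` on U; in particular, if moreover
R̂ = 0 on U, the bracket of two ∇̃-parallel vector fields is again ∇̃-parallel. -/
theorem stmt1 {n : ℕ} (hn : 1 ≤ n) (U : Set (Fin n → ℝ)) (hU : IsOpen U)
    (Γ : Fin n → Fin n → Fin n → (Fin n → ℝ) → ℝ)
    (hΓ : ∀ i k j, ContDiffOn ℝ (⊤ : ℕ∞) (Γ i k j) U)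
    (hRt : ∀ x ∈ U, ∀ i r j k, Rtil Γ i r j k x = 0)
    (X Y : (Fin n → ℝ) → Fin n → ℝ)
    (hX : ContDiffOn ℝ (⊤ : ℕ∞) X U) (hY : ContDiffOn ℝ (⊤ : ℕ∞) Y U)
    (hXpar : ∀ x ∈ U, ∀ i j, pd (fun y => X y i) j x = ∑ a, Γ i j a x * X x a)
    (hYpar : ∀ x ∈ U, ∀ i j, pd (fun y => Y y i) j x = ∑ a, Γ i j a x * Y x a) :
    (∀ x ∈ U, ∀ i j,
      pd (fun y => bracket X Y y i) j x - ∑ c, Γ i j c x * bracket X Y x c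
        = ∑ a, ∑ b, Rhat Γ i a b j x * X x a * Y x b)
    ∧ ((∀ x ∈ U, ∀ i r j k, Rhat Γ i r j k x = 0) →
        ∀ x ∈ U, ∀ i j,
          pd (fun y => bracket X Y y i) j x - ∑ c, Γ i j c x * bracket X Y x c = 0) := by
  have main : ∀ x ∈ U, ∀ i j,
      pd (fun y => bracket X Y y i) j x - ∑ c, Γ i j c x * bracket X Y x c
        = ∑ a, ∑ b, Rhat Γ i a b j x * X x a * Y x b := by
    intro x hx i j
    have hΓd : ∀ p q r, ∀ y ∈ U, DifferentiableAt ℝ (Γ p q r) y := fun p q r y hy =>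
      ((hΓ p q r).contDiffAt (hU.mem_nhds hy)).differentiableAt (by simp)
    have hXd : ∀ a, ∀ y ∈ U, DifferentiableAt ℝ (fun z => X z a) y := fun a y hy =>
      differentiableAt_pi.mp ((hX.contDiffAt (hU.mem_nhds hy)).differentiableAt (by simp)) a
    have hYd : ∀ a, ∀ y ∈ U, DifferentiableAt ℝ (fun z => Y z a) y := fun a y hy =>
      differentiableAt_pi.mp ((hY.contDiffAt (hU.mem_nhds hy)).differentiableAt (by simp)) a
    set G : Fin n → Fin n → Fin n → ℝ := fun p q r => Γ p q r x with hG
    set D : Fin n → Fin n → ℝ := fun a b => pd (Γ i j b) a x with hDdef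
    -- bracket agrees with F near x
    have hFb : ∀ c : Fin n, ∀ y ∈ U, bracket X Y y c
        = ∑ a, (X y a * (∑ b, Γ c a b y * Y y b) - Y y a * (∑ b, Γ c a b y * X y b)) := by
      intro c y hy
      unfold bracket
      exact Finset.sum_congr rfl fun a _ => by rw [hYpar y hy c a, hXpar y hy c a]
    have hpdeq : pd (fun y => bracket X Y y i) j x
        = pd (fun y => ∑ a, (X y a * (∑ b, Γ i a b y * Y y b)
            - Y y a * (∑ b, Γ i a b y * X y b))) j x := by
      refine pd_congr_nhds ?_ j
      filter_upwards [hU.mem_nhds hx] with y hy using hFb i y hy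
    -- curvature substitution for pd (Γ i a b) j x
    have hD : ∀ a b, pd (Γ i a b) j x
        = D a b + ∑ c, (Γ c a b x * Γ i j c x - Γ c j b x * Γ i a c x) := by
      intro a b
      have h := hRt x hx i a j b
      unfold Rtil at h
      simp only [hDdef]
      linarith
    have dSY : ∀ c a, DifferentiableAt ℝ (fun y => ∑ b, Γ c a b y * Y y b) x := fun c a =>
      DifferentiableAt.fun_sum fun b _ => (hΓd c a b x hx).mul (hYd b x hx)
    have dSX : ∀ c a, DifferentiableAt ℝ (fun y => ∑ b, Γ c a b y * X y b) x := fun c a =>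
      DifferentiableAt.fun_sum fun b _ => (hΓd c a b x hx).mul (hXd b x hx)
    have innerY : ∀ a, pd (fun y => ∑ b, Γ i a b y * Y y b) j x
        = ∑ b, ((D a b + ∑ c, (G c a b * G i j c - G c j b * G i a c)) * Y x b
            + G i a b * (∑ c, G b j c * Y x c)) := by
      intro a
      rw [pd_sum _ _ j x (fun b _ => (hΓd i a b x hx).fun_mul (hYd b x hx))]
      refine Finset.sum_congr rfl fun b _ => ?_
      rw [pd_mul (hΓd i a b x hx) (hYd b x hx) j, hD a b, hYpar x hx b j]
    have innerX : ∀ a, pd (fun y => ∑ b, Γ i a b y * X y b) j x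
        = ∑ b, ((D a b + ∑ c, (G c a b * G i j c - G c j b * G i a c)) * X x b
            + G i a b * (∑ c, G b j c * X x c)) := by
      intro a
      rw [pd_sum _ _ j x (fun b _ => (hΓd i a b x hx).fun_mul (hXd b x hx))]
      refine Finset.sum_congr rfl fun b _ => ?_
      rw [pd_mul (hΓd i a b x hx) (hXd b x hx) j, hD a b, hXpar x hx b j]
    have hpdF : pd (fun y => ∑ a, (X y a * (∑ b, Γ i a b y * Y y b)
            - Y y a * (∑ b, Γ i a b y * X y b))) j x
        = ∑ a, ((∑ c, G a j c * X x c) * (∑ b, G i a b * Y x b)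
          + X x a * (∑ b, ((D a b + ∑ c, (G c a b * G i j c - G c j b * G i a c)) * Y x b
              + G i a b * (∑ c, G b j c * Y x c)))
          - ((∑ c, G a j c * Y x c) * (∑ b, G i a b * X x b)
          + Y x a * (∑ b, ((D a b + ∑ c, (G c a b * G i j c - G c j b * G i a c)) * X x b
              + G i a b * (∑ c, G b j c * X x c))))) := by
      rw [pd_sum _ _ j x (fun a _ =>
        ((hXd a x hx).fun_mul (dSY i a)).fun_sub ((hYd a x hx).fun_mul (dSX i a)))]
      refine Finset.sum_congr rfl fun a _ => ?_
      rw [pd_sub ((hXd a x hx).fun_mul (dSY i a)) ((hYd a x hx).fun_mul (dSX i a)),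
        pd_mul (hXd a x hx) (dSY i a), pd_mul (hYd a x hx) (dSX i a),
        innerY a, innerX a, hXpar x hx a j, hYpar x hx a j]
    have hRhat : ∀ a b, Rhat Γ i a b j x
        = D a b - D b a + ∑ c, (G c j a * G i c b - G c j b * G i c a) := fun a b => rfl
    calc pd (fun y => bracket X Y y i) j x - ∑ c, Γ i j c x * bracket X Y x c
        = (∑ a, ((∑ c, G a j c * X x c) * (∑ b, G i a b * Y x b)
          + X x a * (∑ b, ((D a b + ∑ c, (G c a b * G i j c - G c j b * G i a c)) * Y x b
              + G i a b * (∑ c, G b j c * Y x c)))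
          - ((∑ c, G a j c * Y x c) * (∑ b, G i a b * X x b)
          + Y x a * (∑ b, ((D a b + ∑ c, (G c a b * G i j c - G c j b * G i a c)) * X x b
              + G i a b * (∑ c, G b j c * X x c))))))
          - ∑ c, G i j c * (∑ a, (X x a * (∑ b, G c a b * Y x b)
              - Y x a * (∑ b, G c a b * X x b))) := by
          rw [hpdeq, hpdF]
          congr 1
          exact Finset.sum_congr rfl fun c _ => by rw [hFb c x hx]
      _ = ∑ a, ∑ b, ((D a b - D b a + ∑ c, (G c j a * G i c b - G c j b * G i c a))
            * X x a * Y x b) := key_alg i j G D (X x) (Y x)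
      _ = ∑ a, ∑ b, Rhat Γ i a b j x * X x a * Y x b :=
          Finset.sum_congr rfl fun a _ => Finset.sum_congr rfl fun b _ => by rw [hRhat a b]
  refine ⟨main, fun hRh x hx i j => ?_⟩
  rw [main x hx i j]
  simp [hRh x hx]
end

section
/- Assume R̃ = 0 on U. Then the curvature R̂ is the covariant derivative of the torsion: R̂^i_{rj,k} = (∇̃_k T)^i_{rj} at every point of U and for all indices, where (∇̃_k T)^i_{rj} = ∂_k T^i_{rj} − ∑_a Γ^i_{ka} T^a_{rj} + ∑_a Γ^a_{kr} T^i_{aj} + ∑_a Γ^a_{kj} T^i_{ra}. Consequently, R̂ ≡ 0 on U if and only if ∇̃T ≡ 0 on U (i.e. (U,Γ) is a local Lie group if and only if the torsion is ∇̃-parallel). -/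
/-- The torsion `T^i_{kj} = Γ^i_{kj} − Γ^i_{jk}`. -/
def Tor {n : ℕ} (Γ : Fin n → Fin n → Fin n → (Fin n → ℝ) → ℝ)
    (i k j : Fin n) (x : Fin n → ℝ) : ℝ :=
  Γ i k j x - Γ i j k x

/-- The covariant derivative of the torsion:
`(∇̃_c T)^i_{ab} = ∂_c T^i_{ab} − ∑_d Γ^i_{cd} T^d_{ab} + ∑_d Γ^d_{ca} T^i_{db} + ∑_d Γ^d_{cb} T^i_{ad}`. -/
noncomputable def nablaTilTor {n : ℕ} (Γ : Fin n → Fin n → Fin n → (Fin n → ℝ) → ℝ)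
    (c i a b : Fin n) (x : Fin n → ℝ) : ℝ :=
  pd (fun y => Tor Γ i a b y) c x - ∑ d, Γ i c d x * Tor Γ d a b x
    + ∑ d, Γ d c a x * Tor Γ i d b x + ∑ d, Γ d c b x * Tor Γ i a d x

/-- If R̃ = 0 on U, then `R̂^i_{rj,k} = (∇̃_k T)^i_{rj}` on U; consequently R̂ ≡ 0 on U
if and only if ∇̃T ≡ 0 on U. -/
theorem stmt7 {n : ℕ} (hn : 1 ≤ n) (U : Set (Fin n → ℝ)) (hU : IsOpen U)
    (Γ : Fin n → Fin n → Fin n → (Fin n → ℝ) → ℝ)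
    (hΓ : ∀ i k j, ContDiffOn ℝ (⊤ : ℕ∞) (Γ i k j) U)
    (hRt : ∀ x ∈ U, ∀ i r j k, Rtil Γ i r j k x = 0) :
    (∀ x ∈ U, ∀ i r j k, Rhat Γ i r j k x = nablaTilTor Γ k i r j x)
    ∧ ((∀ x ∈ U, ∀ i r j k, Rhat Γ i r j k x = 0)
        ↔ (∀ x ∈ U, ∀ c i a b, nablaTilTor Γ c i a b x = 0)) := by
  have key : ∀ x ∈ U, ∀ i r j k, Rhat Γ i r j k x = nablaTilTor Γ k i r j x := by
    intro x hx i r j k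
    have hdiff : ∀ i k j, DifferentiableAt ℝ (Γ i k j) x := fun i k j =>
      ((hΓ i k j).contDiffAt (hU.mem_nhds hx)).differentiableAt (by simp)
    have hTor : pd (fun y => Tor Γ i r j y) k x = pd (Γ i r j) k x - pd (Γ i j r) k x := by
      unfold pd Tor
      rw [fderiv_fun_sub (hdiff i r j) (hdiff i j r)]
      simp
    have h1 := hRt x hx i k r j
    have h2 := hRt x hx i k j r
    unfold Rtil at h1 h2
    unfold Rhat nablaTilTor
    rw [hTor]
    simp only [Tor, mul_sub, sub_mul, Finset.sum_sub_distrib] at *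
    simp only [mul_comm] at *
    linarith
  refine ⟨key, ?_, ?_⟩
  · intro h x hx c i a b
    rw [← key x hx i a b c]
    exact h x hx i a b c
  · intro h x hx i r j k
    rw [key x hx i r j k]
    exact h x hx k i r j
end

section
/- Assume R̃ = 0 and R̂ = 0 on U (i.e. (U,Γ) is a local Lie group). Then the torsion bracket satisfies the Jacobi identity: J(x)(u,v,w) = 0 for every x ∈ U and all u,v,w ∈ ℝⁿ. Consequently, for each x ∈ U the bilinear alternating bracket [u,v]_x = T(x)(u,v) makes ℝⁿ into a Lie algebra. -/
/-- The torsion bracket `T(x)(u,v)^i = ∑_{a,b} T^i_{ab}(x) u^a v^b`. -/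
def Tbr {n : ℕ} (Γ : Fin n → Fin n → Fin n → (Fin n → ℝ) → ℝ)
    (x : Fin n → ℝ) (u v : Fin n → ℝ) : Fin n → ℝ :=
  fun i => ∑ a, ∑ b, Tor Γ i a b x * u a * v b

lemma sum3_rot {n : ℕ} (F : Fin n → Fin n → Fin n → ℝ) :
    (∑ a, ∑ b, ∑ c, F a b c) = ∑ b, ∑ c, ∑ a, F a b c := by
  rw [Finset.sum_comm]
  exact Finset.sum_congr rfl fun b _ => Finset.sum_comm

lemma Tbr_expand {n : ℕ} (Γ : Fin n → Fin n → Fin n → (Fin n → ℝ) → ℝ)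
    (x u v w : Fin n → ℝ) (i : Fin n) :
    Tbr Γ x u (Tbr Γ x v w) i
      = ∑ a, ∑ c, ∑ d, (∑ b, Tor Γ i a b x * Tor Γ b c d x) * (u a * (v c * w d)) := by
  simp only [Tbr]
  refine Finset.sum_congr rfl fun a _ => ?_
  simp only [Finset.mul_sum]
  rw [Finset.sum_comm]
  refine Finset.sum_congr rfl fun c _ => ?_
  rw [Finset.sum_comm]
  refine Finset.sum_congr rfl fun d _ => ?_
  rw [Finset.sum_mul]
  exact Finset.sum_congr rfl fun b _ => by ring

/-- If R̃ = 0 and R̂ = 0 on U (a local Lie group), the torsion bracket satisfies the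
Jacobi identity at each x ∈ U; together with bilinearity and antisymmetry, the bracket
`[u,v]_x = T(x)(u,v)` makes ℝⁿ into a Lie algebra. -/
theorem stmt9 {n : ℕ} (hn : 1 ≤ n) (U : Set (Fin n → ℝ)) (hU : IsOpen U)
    (Γ : Fin n → Fin n → Fin n → (Fin n → ℝ) → ℝ)
    (hΓ : ∀ i k j, ContDiffOn ℝ (⊤ : ℕ∞) (Γ i k j) U)
    (hRt : ∀ x ∈ U, ∀ i r j k, Rtil Γ i r j k x = 0)
    (hRh : ∀ x ∈ U, ∀ i r j k, Rhat Γ i r j k x = 0) :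
    (∀ x ∈ U, ∀ u v w : Fin n → ℝ,
      Tbr Γ x u (Tbr Γ x v w) + Tbr Γ x w (Tbr Γ x u v) + Tbr Γ x v (Tbr Γ x w u) = 0)
    ∧ (∀ x ∈ U, ∀ u v : Fin n → ℝ, Tbr Γ x u v = -Tbr Γ x v u) := by
  constructor
  · intro x hx u v w
    have key : ∀ i p q r : Fin n,
        (∑ b, Tor Γ i p b x * Tor Γ b q r x)
          + (∑ b, Tor Γ i r b x * Tor Γ b p q x)
          + (∑ b, Tor Γ i q b x * Tor Γ b r p x) = 0 := by
      intro i p q r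
      have hc : (∑ b, (Tor Γ i p b x * Tor Γ b q r x + Tor Γ i r b x * Tor Γ b p q x
            + Tor Γ i q b x * Tor Γ b r p x))
          = -Rtil Γ i p q r x + Rtil Γ i p r q x - Rtil Γ i q r p x
            - Rhat Γ i p q r x + Rhat Γ i p r q x - Rhat Γ i q r p x := by
        calc (∑ b, (Tor Γ i p b x * Tor Γ b q r x + Tor Γ i r b x * Tor Γ b p q x
              + Tor Γ i q b x * Tor Γ b r p x))
            = ∑ b, (-(Γ b p r x * Γ i q b x - Γ b q r x * Γ i p b x)
                + (Γ b p q x * Γ i r b x - Γ b r q x * Γ i p b x)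
                - (Γ b q p x * Γ i r b x - Γ b r p x * Γ i q b x)
                - (Γ b r p x * Γ i b q x - Γ b r q x * Γ i b p x)
                + (Γ b q p x * Γ i b r x - Γ b q r x * Γ i b p x)
                - (Γ b p q x * Γ i b r x - Γ b p r x * Γ i b q x)) :=
              Finset.sum_congr rfl fun b _ => by simp only [Tor]; ring
          _ = -Rtil Γ i p q r x + Rtil Γ i p r q x - Rtil Γ i q r p x
                - Rhat Γ i p q r x + Rhat Γ i p r q x - Rhat Γ i q r p x := by
              simp only [Rtil, Rhat, Finset.sum_add_distrib, Finset.sum_sub_distrib,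
                Finset.sum_neg_distrib]
              ring
      have h0 : (∑ b, (Tor Γ i p b x * Tor Γ b q r x + Tor Γ i r b x * Tor Γ b p q x
            + Tor Γ i q b x * Tor Γ b r p x)) = 0 := by
        rw [hc, hRt x hx i p q r, hRt x hx i p r q, hRt x hx i q r p,
          hRh x hx i p q r, hRh x hx i p r q, hRh x hx i q r p]
        ring
      rw [← Finset.sum_add_distrib, ← Finset.sum_add_distrib]
      exact h0
    funext i
    simp only [Pi.add_apply, Pi.zero_apply]
    rw [Tbr_expand Γ x u v w i, Tbr_expand Γ x w u v i, Tbr_expand Γ x v w u i,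
      sum3_rot (fun a c d => (∑ b, Tor Γ i a b x * Tor Γ b c d x) * (w a * (u c * v d))),
      sum3_rot (fun a c d => (∑ b, Tor Γ i a b x * Tor Γ b c d x) * (v a * (w c * u d))),
      sum3_rot (fun c d a => (∑ b, Tor Γ i a b x * Tor Γ b c d x) * (v a * (w c * u d)))]
    rw [← Finset.sum_add_distrib, ← Finset.sum_add_distrib]
    refine Finset.sum_eq_zero fun p _ => ?_
    rw [← Finset.sum_add_distrib, ← Finset.sum_add_distrib]
    refine Finset.sum_eq_zero fun q _ => ?_
    rw [← Finset.sum_add_distrib, ← Finset.sum_add_distrib]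
    refine Finset.sum_eq_zero fun r _ => ?_
    have h := key i p q r
    linear_combination (u p * (v q * w r)) * h
  · intro x hx u v
    funext i
    simp only [Tbr, Pi.neg_apply, ← Finset.sum_neg_distrib]
    rw [Finset.sum_comm]
    exact Finset.sum_congr rfl fun b _ => Finset.sum_congr rfl fun a _ => by
      simp only [Tor]; ring
end

section
/- (The Kodaira–Spencer class of a constant deformation is a cocycle) Let Γ be a parallelism on U with torsion T, and let f : ℝ × U → n×n real matrices be smooth with each f(t,x) invertible and f(0,x) = I for all x. Assume: (i) for all t, x and indices i,j,k, ∑_a f^i_a(t,x) T^a_{jk}(x) = [∑_a (∂f^i_k/∂x^a)(t,x) f^a_j(t,x) + ∑_{a,c} f^i_c(t,x) Γ^c_{ak}(x) f^a_j(t,x)] − [the same expression with k and j interchanged] (constancy of the deformation); and (ii) for all x and indices i,j,k, ∑_a (∂f^i_a/∂t)(0,x) T^a_{jk}(x) = 0. Then for every x ∈ U and all indices i,j,k: [∂/∂x^j ((∂f^i_k/∂t)(0,x)) + ∑_a Γ^i_{ak}(x)(∂f^a_j/∂t)(0,x)] − [∂/∂x^k ((∂f^i_j/∂t)(0,x)) +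 ∑_a Γ^i_{aj}(x)(∂f^a_k/∂t)(0,x)] = 0. -/

lemma aux_hasDerivAt_sliceT {E : Type*} [NormedAddCommGroup E] [NormedSpace ℝ E]
    {F : ℝ × E → ℝ} {L : ℝ × E →L[ℝ] ℝ} {t : ℝ} {x : E}
    (h : HasFDerivAt F L (t, x)) :
    HasDerivAt (fun s => F (s, x)) (L (1, 0)) t :=
  h.comp_hasDerivAt t ((hasDerivAt_id t).prodMk (hasDerivAt_const t x))

lemma aux_hasFDerivAt_sliceX {E : Type*} [NormedAddCommGroup E] [NormedSpace ℝ E]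
    {F : ℝ × E → ℝ} {L : ℝ × E →L[ℝ] ℝ} {t : ℝ} {x : E}
    (h : HasFDerivAt F L (t, x)) :
    HasFDerivAt (fun y => F (t, y)) (L.comp (ContinuousLinearMap.inr ℝ ℝ E)) x :=
  h.comp x (hasFDerivAt_prodMk_right t x)

lemma aux_hasFDerivAt_fderiv_apply {E : Type*} [NormedAddCommGroup E] [NormedSpace ℝ E]
    {F : E → ℝ} {p : E} (hF : ContDiffAt ℝ (⊤ : ℕ∞) F p) (v : E) :
    HasFDerivAt (fun q => fderiv ℝ F q v)
      ((ContinuousLinearMap.apply ℝ ℝ v).comp (fderiv ℝ (fderiv ℝ F) p)) p := by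
  have h1 : HasFDerivAt (fderiv ℝ F) (fderiv ℝ (fderiv ℝ F) p) p :=
    ((hF.fderiv_right (m := (⊤ : ℕ∞)) (by simp)).differentiableAt (by simp)).hasFDerivAt
  exact (ContinuousLinearMap.apply ℝ ℝ v).hasFDerivAt.comp p h1

lemma aux_symm {E : Type*} [NormedAddCommGroup E] [NormedSpace ℝ E]
    {F : E → ℝ} {p : E} (hF : ContDiffAt ℝ (⊤ : ℕ∞) F p) (v w : E) :
    fderiv ℝ (fderiv ℝ F) p v w = fderiv ℝ (fderiv ℝ F) p w v :=
  (hF.isSymmSndFDerivAt (by rw [minSmoothness_of_isRCLikeNormedField]; exact WithTop.coe_le_coe.mpr le_top)) v w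

/-- The Kodaira–Spencer class of a constant deformation is a cocycle: if f is a smooth
curve of gauge transformations with f(0) = I which deforms Γ constantly (hypothesis (i))
and whose t-derivative at 0 kills the torsion (hypothesis (ii)), then
`d̂₀((∂f/∂t)(0,·)) = 0`. -/
theorem stmt17 {n : ℕ} (hn : 1 ≤ n) (U : Set (Fin n → ℝ)) (hU : IsOpen U)
    (Γ : Fin n → Fin n → Fin n → (Fin n → ℝ) → ℝ)
    (hΓ : ∀ i k j, ContDiffOn ℝ (⊤ : ℕ∞) (Γ i k j) U)
    (f : Fin n → Fin n → ℝ → (Fin n → ℝ) → ℝ)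
    (hfsm : ∀ i j, ContDiffOn ℝ (⊤ : ℕ∞)
      (fun p : ℝ × (Fin n → ℝ) => f i j p.1 p.2) (Set.univ ×ˢ U))
    (hfinv : ∀ t : ℝ, ∀ x ∈ U, IsUnit (Matrix.of fun i j => f i j t x))
    (hf0 : ∀ x ∈ U, ∀ i j, f i j 0 x = if i = j then 1 else 0)
    (hconst : ∀ t : ℝ, ∀ x ∈ U, ∀ i j k,
      ∑ a, f i a t x * Tor Γ a j k x
        = (∑ a, pd (fun y => f i k t y) a x * f a j t x
            + ∑ a, ∑ c, f i c t x * Γ c a k x * f a j t x)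
          - (∑ a, pd (fun y => f i j t y) a x * f a k t x
            + ∑ a, ∑ c, f i c t x * Γ c a j x * f a k t x))
    (hder : ∀ x ∈ U, ∀ i j k,
      ∑ a, deriv (fun t => f i a t x) 0 * Tor Γ a j k x = 0) :
    ∀ x ∈ U, ∀ i j k,
      (pd (fun y => deriv (fun t => f i k t y) 0) j x
          + ∑ a, Γ i a k x * deriv (fun t => f a j t x) 0)
        - (pd (fun y => deriv (fun t => f i j t y) 0) k x
          + ∑ a, Γ i a j x * deriv (fun t => f a k t x) 0) = 0 := by
  intro x hx i j k
  classical
  have hOopen : IsOpen ((Set.univ : Set ℝ) ×ˢ U) := isOpen_univ.prod hU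
  set F : Fin n → Fin n → ℝ × (Fin n → ℝ) → ℝ := fun a b p => f a b p.1 p.2 with hF
  -- smoothness at points over U
  have hcd : ∀ (a b : Fin n) (t : ℝ) (y : Fin n → ℝ), y ∈ U → ContDiffAt ℝ (⊤ : ℕ∞) (F a b) (t, y) :=
    fun a b t y hy => (hfsm a b).contDiffAt (hOopen.mem_nhds ⟨trivial, hy⟩)
  have hdf : ∀ (a b : Fin n) (t : ℝ) (y : Fin n → ℝ), y ∈ U →
      HasFDerivAt (F a b) (fderiv ℝ (F a b) (t, y)) (t, y) :=
    fun a b t y hy => ((hcd a b t y hy).differentiableAt (by simp)).hasFDerivAt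
  -- t-slice derivatives
  have h1 : ∀ (a b : Fin n) (t : ℝ), HasDerivAt (fun s => f a b s x)
      (fderiv ℝ (F a b) (t, x) (1, 0)) t :=
    fun a b t => aux_hasDerivAt_sliceT (hdf a b t x hx)
  have h1' : ∀ a b : Fin n, HasDerivAt (fun s => f a b s x)
      (deriv (fun s => f a b s x) 0) 0 :=
    fun a b => (h1 a b 0).differentiableAt.hasDerivAt
  -- pd of x-slices
  have hpd : ∀ (a b : Fin n) (t : ℝ) (w : Fin n),
      pd (fun y => f a b t y) w x = fderiv ℝ (F a b) (t, x) (0, Pi.single w 1) := by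
    intro a b t w
    have h := (aux_hasFDerivAt_sliceX (hdf a b t x hx)).fderiv
    show fderiv ℝ (fun y => f a b t y) x (Pi.single w 1) = _
    rw [h]
    simp
  -- pd of slices at t = 0 vanish (f(0,·) is constant on U)
  have hpd0 : ∀ (a b : Fin n) (w : Fin n),
      fderiv ℝ (F a b) (0, x) (0, Pi.single w 1) = 0 := by
    intro a b w
    rw [← hpd a b 0 w]
    have hev : (fun y => f a b 0 y) =ᶠ[nhds x] (fun _ => if a = b then (1:ℝ) else 0) := by
      filter_upwards [hU.mem_nhds hx] with y hy
      exact hf0 y hy a b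
    show fderiv ℝ (fun y => f a b 0 y) x (Pi.single w 1) = 0
    rw [hev.fderiv_eq]
    simp
  -- second-derivative t-lines: derivative in t of t ↦ fderiv F (t,x) v
  have h2 : ∀ (a b : Fin n) (v : ℝ × (Fin n → ℝ)),
      HasDerivAt (fun t => fderiv ℝ (F a b) (t, x) v)
        (fderiv ℝ (fderiv ℝ (F a b)) (0, x) (1, 0) v) 0 := by
    intro a b v
    have h := aux_hasFDerivAt_fderiv_apply (hcd a b 0 x hx) v
    have := h.comp_hasDerivAt (0:ℝ) ((hasDerivAt_id (0:ℝ)).prodMk (hasDerivAt_const (0:ℝ) x))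
    exact this
  -- derivative in t of t ↦ pd (f . t ·) w x
  have h3 : ∀ (a b : Fin n) (w : Fin n),
      HasDerivAt (fun t => pd (fun y => f a b t y) w x)
        (fderiv ℝ (fderiv ℝ (F a b)) (0, x) (1, 0) (0, Pi.single w 1)) 0 := by
    intro a b w
    have hfun : (fun t => pd (fun y => f a b t y) w x)
        = fun t => fderiv ℝ (F a b) (t, x) (0, Pi.single w 1) :=
      funext fun t => hpd a b t w
    rw [hfun]
    exact h2 a b _
  -- the goal's pd terms
  have hgoal : ∀ (b : Fin n) (w : Fin n),
      pd (fun y => deriv (fun t => f i b t y) 0) w x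
        = fderiv ℝ (fderiv ℝ (F i b)) (0, x) (1, 0) (0, Pi.single w 1) := by
    intro b w
    have hev : (fun y => deriv (fun t => f i b t y) 0)
        =ᶠ[nhds x] (fun y => fderiv ℝ (F i b) (0, y) (1, 0)) := by
      filter_upwards [hU.mem_nhds hx] with y hy
      exact (aux_hasDerivAt_sliceT (hdf i b 0 y hy)).deriv
    show fderiv ℝ (fun y => deriv (fun t => f i b t y) 0) x (Pi.single w 1) = _
    rw [hev.fderiv_eq]
    have hcomp : HasFDerivAt (fun y => (fderiv ℝ (F i b) (0, y)) ((1:ℝ), (0 : Fin n → ℝ)))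
        ((((ContinuousLinearMap.apply ℝ ℝ) ((1:ℝ), (0 : Fin n → ℝ))).comp
          (fderiv ℝ (fderiv ℝ (F i b)) (0, x))).comp
          (ContinuousLinearMap.inr ℝ ℝ (Fin n → ℝ))) x :=
      (aux_hasFDerivAt_fderiv_apply (hcd i b 0 x hx) ((1:ℝ), (0: Fin n → ℝ))).comp x
        (hasFDerivAt_prodMk_right (0:ℝ) x)
    rw [hcomp.fderiv]
    simp only [ContinuousLinearMap.comp_apply, ContinuousLinearMap.inr_apply,
      ContinuousLinearMap.apply_apply]
    exact aux_symm (hcd i b 0 x hx) _ _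
  -- differentiate hconst at t = 0
  have HL : HasDerivAt (fun t => ∑ a, f i a t x * Tor Γ a j k x)
      (∑ a, deriv (fun s => f i a s x) 0 * Tor Γ a j k x) 0 :=
    HasDerivAt.fun_sum fun a _ => (h1' i a).mul_const _
  have Hs1 : HasDerivAt (fun t => ∑ a, pd (fun y => f i k t y) a x * f a j t x)
      (∑ a, (fderiv ℝ (fderiv ℝ (F i k)) (0, x) (1, 0) (0, Pi.single a 1) * f a j 0 x
        + pd (fun y => f i k 0 y) a x * deriv (fun s => f a j s x) 0)) 0 :=
    HasDerivAt.fun_sum fun a _ => (h3 i k a).mul (h1' a j)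
  have Hs2 : HasDerivAt (fun t => ∑ a, ∑ c, f i c t x * Γ c a k x * f a j t x)
      (∑ a, ∑ c, (deriv (fun s => f i c s x) 0 * Γ c a k x * f a j 0 x
        + f i c 0 x * Γ c a k x * deriv (fun s => f a j s x) 0)) 0 :=
    HasDerivAt.fun_sum fun a _ => HasDerivAt.fun_sum fun c _ =>
      ((h1' i c).mul_const (Γ c a k x)).mul (h1' a j)
  have Hs3 : HasDerivAt (fun t => ∑ a, pd (fun y => f i j t y) a x * f a k t x)
      (∑ a, (fderiv ℝ (fderiv ℝ (F i j)) (0, x) (1, 0) (0, Pi.single a 1) * f a k 0 x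
        + pd (fun y => f i j 0 y) a x * deriv (fun s => f a k s x) 0)) 0 :=
    HasDerivAt.fun_sum fun a _ => (h3 i j a).mul (h1' a k)
  have Hs4 : HasDerivAt (fun t => ∑ a, ∑ c, f i c t x * Γ c a j x * f a k t x)
      (∑ a, ∑ c, (deriv (fun s => f i c s x) 0 * Γ c a j x * f a k 0 x
        + f i c 0 x * Γ c a j x * deriv (fun s => f a k s x) 0)) 0 :=
    HasDerivAt.fun_sum fun a _ => HasDerivAt.fun_sum fun c _ =>
      ((h1' i c).mul_const (Γ c a j x)).mul (h1' a k)
  have HR := (Hs1.add Hs2).sub (Hs3.add Hs4)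
  have hfe : (fun t => ∑ a, f i a t x * Tor Γ a j k x)
      = (fun t => (∑ a, pd (fun y => f i k t y) a x * f a j t x
            + ∑ a, ∑ c, f i c t x * Γ c a k x * f a j t x)
          - (∑ a, pd (fun y => f i j t y) a x * f a k t x
            + ∑ a, ∑ c, f i c t x * Γ c a j x * f a k t x)) :=
    funext fun t => hconst t x hx i j k
  rw [hfe] at HL
  have hDD := HL.unique HR
  rw [hder x hx i j k] at hDD
  -- simplify hDD using hf0 and hpd0
  have hpdz : ∀ (a b : Fin n) (w : Fin n), pd (fun y => f a b 0 y) w x = 0 := by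
    intro a b w; rw [hpd a b 0 w]; exact hpd0 a b w
  simp only [hf0 x hx, hpdz, zero_mul, add_zero, mul_ite, mul_one, mul_zero,
    Finset.sum_ite_eq', Finset.mem_univ, if_true, ite_mul, one_mul, zero_mul] at hDD
  simp only [Finset.sum_add_distrib, Finset.sum_ite_irrel, Finset.sum_ite_eq,
    Finset.sum_ite_eq', Finset.mem_univ, if_true, Finset.sum_const_zero] at hDD
  have hT : ∑ a, deriv (fun t => f i a t x) 0 * Γ a j k x
      - ∑ a, deriv (fun t => f i a t x) 0 * Γ a k j x = 0 := by
    have := hder x hx i j k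
    simpa [Tor, mul_sub, Finset.sum_sub_distrib] using this
  rw [hgoal k j, hgoal j k]
  linarith [hDD, hT]
end
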